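/- If T : L^n → M is a symmetric lattice n-homomorphism between distributive lattices (n ≥ 2), then T satisfies T(x_1 ∧ x_2, x_1 ∨ x_2, x_3,...,x_n) = T(x_1, x_2, x_3,...,x_n) for all x_1,...,x_n ∈ L. -/

import Mathlib

def median {L : Type*} [DistribLattice L] {n : ℕ} (k : ℕ) (hk1 : 1 ≤ k) (hkn : k ≤ n)
    (x : Fin n → L) : L :=
  ((Finset.univ.powersetCard (n + 1 - k)).attach).sup'
    (Finset.attach_nonempty_iff.mpr
      (Finset.powersetCard_nonempty.mpr (by simp [Finset.card_univ]; omega)))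
    fun s => s.1.inf'
      (Finset.card_pos.mp (by
        have h := (Finset.mem_powersetCard.mp s.2).2
        omega)) x

def medianInf {L : Type*} [DistribLattice L] {n : ℕ} (k : ℕ) (hk1 : 1 ≤ k) (hkn : k ≤ n)
    (x : Fin n → L) : L :=
  ((Finset.univ.powersetCard (n + 1 - k)).attach).inf'
    (Finset.attach_nonempty_iff.mpr
      (Finset.powersetCard_nonempty.mpr (by simp [Finset.card_univ]; omega)))
    fun s => s.1.sup'
      (Finset.card_pos.mp (by
        have h := (Finset.mem_powersetCard.mp s.2).2
        omega)) x
def TotalOrderizationInvariant {L : Type*} [DistribLattice L] {A : Type*} {n : ℕ}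
    (T : (Fin n → L) → A) : Prop :=
  ∀ x : Fin n → L,
    T x = T fun k => median (k.1 + 1) (Nat.succ_le_succ (Nat.zero_le _)) k.2 x

/-- `T` is symmetric: invariant under every permutation of its arguments. -/
def IsSymmetricMap {L A : Type*} {n : ℕ} (T : (Fin n → L) → A) : Prop :=
  ∀ (σ : Equiv.Perm (Fin n)) (x : Fin n → L), T (x ∘ σ) = T x
/-- `T : Lⁿ → M` is a lattice n-homomorphism: in each coordinate separately it
preserves binary joins and binary meets. -/
def IsLatticeMultiHom {L M : Type*} [DistribLattice L] [DistribLattice M] {n : ℕ}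
    (T : (Fin n → L) → M) : Prop :=
  ∀ (x : Fin n → L) (i : Fin n) (y : L),
    T (Function.update x i (x i ⊔ y)) = T x ⊔ T (Function.update x i y) ∧
    T (Function.update x i (x i ⊓ y)) = T x ⊓ T (Function.update x i y)

/-- `P : L → M` is a lattice homomorphism. -/
def IsLatticeHomMap {L M : Type*} [DistribLattice L] [DistribLattice M] (P : L → M) : Prop :=
  ∀ a b : L, P (a ⊔ b) = P a ⊔ P b ∧ P (a ⊓ b) = P a ⊓ P b

/-
Fix all arguments but two, at positions `i ≠ j`, and regard `T` as a function `f u v` of those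
two; it is a lattice homomorphism in each of `u`, `v`, and symmetry gives `f a b = f b a`.
Expanding `f (a ⊓ b) (a ⊔ b)` first in `v` and then in `u` writes it as a join of meets each
below `f a b` or `f b a`; expanding in the other order writes it as a meet of joins each above
one of them. So it is squeezed between `f a b ⊓ f b a` and `f a b ⊔ f b a`, which coincide.
-/

theorem apply_inf_sup_eq_of_isLatticeHomMap {L M : Type*} [DistribLattice L]
    [DistribLattice M] (f : L → L → M) (hleft : ∀ v, IsLatticeHomMap (f · v))
    (hright : ∀ u, IsLatticeHomMap (f u)) {a b : L} (hab : f a b = f b a) :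
    f (a ⊓ b) (a ⊔ b) = f a b := by
  have inf_left (u u' v : L) : f (u ⊓ u') v = f u v ⊓ f u' v := (hleft v u u').2
  have sup_right (u v v' : L) : f u (v ⊔ v') = f u v ⊔ f u v' := (hright u v v').1
  apply le_antisymm
  · calc f (a ⊓ b) (a ⊔ b)
        = (f a a ⊓ f b a) ⊔ (f a b ⊓ f b b) := by rw [sup_right, inf_left, inf_left]
      _ ≤ f b a ⊔ f a b := sup_le_sup inf_le_right inf_le_left
      _ = f a b := by rw [hab, sup_idem]
  · calc f a b
        = f a b ⊓ f b a := by rw [hab, inf_idem]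
      _ ≤ (f a a ⊔ f a b) ⊓ (f b a ⊔ f b b) := inf_le_inf le_sup_right le_sup_left
      _ = f (a ⊓ b) (a ⊔ b) := by rw [inf_left, sup_right, sup_right]

theorem IsLatticeMultiHom.isLatticeHomMap_update {L M : Type*} [DistribLattice L]
    [DistribLattice M] {n : ℕ} {T : (Fin n → L) → M} (hT : IsLatticeMultiHom T)
    (x : Fin n → L) (i : Fin n) : IsLatticeHomMap fun u => T (Function.update x i u) := by
  intro a b
  simpa only [Function.update_self, Function.update_idem] using hT (Function.update x i a) i b

theorem IsSymmetricMap.update_update_swap {L A : Type*} {n : ℕ} {T : (Fin n → L) → A}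
    (hsymm : IsSymmetricMap T) (x : Fin n → L) (i j : Fin n) :
    T (Function.update (Function.update x i (x j)) j (x i)) = T x := by
  rw [← Equiv.comp_swap_eq_update, hsymm]

theorem IsLatticeMultiHom.update_inf_update_sup_of_isSymmetricMap {L M : Type*}
    [DistribLattice L] [DistribLattice M] {n : ℕ} {T : (Fin n → L) → M}
    (hT : IsLatticeMultiHom T)
    (hsymm : IsSymmetricMap T) {i j : Fin n} (hij : i ≠ j) (x : Fin n → L) :
    T (Function.update (Function.update x i (x i ⊓ x j)) j (x i ⊔ x j)) = T x := by
  have hf := apply_inf_sup_eq_of_isLatticeHomMap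
    (fun u v => T (Function.update (Function.update x i u) j v))
    (fun v => by
      simp only [Function.update_comm hij]
      exact hT.isLatticeHomMap_update _ i)
    (fun u => hT.isLatticeHomMap_update _ j)
    (a := x i) (b := x j)
    (by simp only [Function.update_eq_self, hsymm.update_update_swap])
  simpa only [Function.update_eq_self] using hf

/-- A symmetric lattice n-homomorphism is invariant under replacing its first two
arguments by their meet and join. -/
theorem symm_multiHom_meetJoin {L M : Type*} [DistribLattice L] [DistribLattice M]
    {n : ℕ} (hn : 2 ≤ n) (T : (Fin n → L) → M) (hT : IsLatticeMultiHom T)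
    (hsymm : IsSymmetricMap T) (x : Fin n → L) :
    T (Function.update
        (Function.update x ⟨0, by omega⟩ (x ⟨0, by omega⟩ ⊓ x ⟨1, by omega⟩))
        ⟨1, by omega⟩ (x ⟨0, by omega⟩ ⊔ x ⟨1, by omega⟩)) = T x :=
  hT.update_inf_update_sup_of_isSymmetricMap hsymm (by simp [Fin.ext_iff]) x
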